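/- arXiv:1901.02650 — 3 statements merged into one kernel-verified Lean document; each statement's English description precedes it below -/
import Mathlib

section
/- One has Q(ζ_3) ∩ Q(ζ_{10}, 21^{1/10}) = Q, while Q(ζ_3) ∩ Q(ζ_{70}, 21^{1/70}) = Q(ζ_3) = Q(√−3). In particular, with g = 21, d = 3, t = 10 and q = 7 (so that gcd(q, 2dt) = 1 but gcd(q, g) ≠ 1), the equality Q(ζ_d) ∩ Q(ζ_{qt}, g^{1/qt}) = Q(ζ_d) ∩ Q(ζ_t, g^{1/t}) fails. -/
/-- `ℚ(ζ_d)`, the cyclotomic field generated by `e^{2πi/d}` inside `ℂ`. -/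
noncomputable def cyclo (d : ℕ) : IntermediateField ℚ ℂ :=
  IntermediateField.adjoin ℚ {Complex.exp (2 * Real.pi * Complex.I / d)}

/-- `ℚ(ζ_n, g^{1/n})`, the splitting field of `X^n - g` over `ℚ` inside `ℂ`. -/
noncomputable def kummer (g : ℤ) (n : ℕ) : IntermediateField ℚ ℂ :=
  IntermediateField.adjoin ℚ {z : ℂ | z ^ n = (g : ℂ)}

open Complex IntermediateField Polynomial

instance fact461 : Fact (Nat.Prime 461) := ⟨by norm_num⟩
instance fact7 : Fact (Nat.Prime 7) := ⟨by norm_num⟩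


lemma zeta3_prim : IsPrimitiveRoot (Complex.exp (2 * Real.pi * Complex.I / (3:ℕ))) 3 :=
  Complex.isPrimitiveRoot_exp 3 (by norm_num)

lemma zeta3_val : Complex.exp (2 * Real.pi * Complex.I / (3:ℕ)) =
    (-1 + Complex.I * (Real.sqrt 3 : ℂ)) / 2 := by
  have h : (2 * (Real.pi:ℂ) * Complex.I / (3:ℕ)) = ((2 * Real.pi / 3 : ℝ) : ℂ) * Complex.I := by
    push_cast; ring
  rw [h, Complex.exp_mul_I, ← Complex.ofReal_cos, ← Complex.ofReal_sin]
  have hc : Real.cos (2 * Real.pi / 3) = -(1/2) := by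
    have : 2 * Real.pi / 3 = Real.pi - Real.pi / 3 := by ring
    rw [this, Real.cos_pi_sub, Real.cos_pi_div_three]
  have hs : Real.sin (2 * Real.pi / 3) = Real.sqrt 3 / 2 := by
    have : 2 * Real.pi / 3 = Real.pi - Real.pi / 3 := by ring
    rw [this, Real.sin_pi_sub, Real.sin_pi_div_three]
  rw [hc, hs]
  push_cast
  ring

lemma zeta3_int : IsIntegral ℚ (Complex.exp (2 * Real.pi * Complex.I / (3:ℕ))) :=
  (zeta3_prim.isIntegral (by norm_num)).tower_top

lemma cyclo3_eq_adjoin : cyclo 3 = IntermediateField.adjoin ℚ {(Complex.I * (Real.sqrt 3 : ℂ) : ℂ)} := by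
  set ζ := Complex.exp (2 * Real.pi * Complex.I / (3:ℕ)) with hζ
  apply le_antisymm
  · rw [cyclo, IntermediateField.adjoin_le_iff]
    rintro x rfl
    have h1 : Complex.I * (Real.sqrt 3 : ℂ) ∈ IntermediateField.adjoin ℚ {(Complex.I * (Real.sqrt 3 : ℂ) : ℂ)} :=
      IntermediateField.subset_adjoin ℚ _ rfl
    have : (Complex.exp (2 * Real.pi * Complex.I / (3:ℕ))) =
        (-1 + Complex.I * (Real.sqrt 3 : ℂ)) / 2 := zeta3_val
    rw [SetLike.mem_coe, this]
    exact div_mem (add_mem (neg_mem (one_mem _)) h1) (ofNat_mem _ 2)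
  · rw [IntermediateField.adjoin_le_iff]
    rintro x rfl
    have h1 : ζ ∈ cyclo 3 := IntermediateField.subset_adjoin ℚ _ rfl
    have : Complex.I * (Real.sqrt 3 : ℂ) = 2 * ζ + 1 := by
      rw [hζ, zeta3_val]; ring
    rw [SetLike.mem_coe, this]
    exact add_mem (mul_mem (ofNat_mem _ 2) h1) (one_mem _)

lemma cyclo3_finrank : Module.finrank ℚ (cyclo 3) = 2 := by
  rw [cyclo, IntermediateField.adjoin.finrank zeta3_int,
    ← Polynomial.cyclotomic_eq_minpoly_rat zeta3_prim (by norm_num)]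
  simp only [Polynomial.natDegree_cyclotomic]
  decide

instance cyclo3_fd : FiniteDimensional ℚ (cyclo 3) := by
  rw [cyclo]
  exact IntermediateField.adjoin.finiteDimensional zeta3_int

lemma cyclo3_le_of_inf_ne_bot {K : IntermediateField ℚ ℂ} (h : cyclo 3 ⊓ K ≠ ⊥) :
    cyclo 3 ≤ K := by
  obtain ⟨x, hxL, hxB⟩ : ∃ x, x ∈ cyclo 3 ⊓ K ∧ x ∉ (⊥ : IntermediateField ℚ ℂ) := by
    by_contra hc
    push_neg at hc
    exact h (le_antisymm (fun x hx => hc x hx) bot_le)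
  have hxC : x ∈ cyclo 3 := hxL.1
  have hxK : x ∈ K := hxL.2
  -- x is integral over ℚ
  have hint : IsIntegral ℚ x := by
    have : IsIntegral ℚ (⟨x, hxC⟩ : cyclo 3) := IsIntegral.of_finite ℚ _
    exact (IntermediateField.isIntegral_iff.mp this)
  -- degree of minpoly divides 2 and is not 1, hence ℚ⟮x⟯ = cyclo 3
  have hdvd : (minpoly ℚ (⟨x, hxC⟩ : cyclo 3)).natDegree ∣ 2 := by
    rw [← cyclo3_finrank]
    exact minpoly.degree_dvd (IsIntegral.of_finite ℚ _)
  have hmp : minpoly ℚ (⟨x, hxC⟩ : cyclo 3) = minpoly ℚ x := IntermediateField.minpoly_eq _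
  have hne1 : (minpoly ℚ x).natDegree ≠ 1 := by
    intro h1
    apply hxB
    have hfr : Module.finrank ℚ ℚ⟮x⟯ = 1 := by
      rw [IntermediateField.adjoin.finrank hint, h1]
    exact IntermediateField.adjoin_simple_eq_bot_iff.mp
      (IntermediateField.finrank_eq_one_iff.mp hfr)
  have hdeg2 : (minpoly ℚ x).natDegree = 2 := by
    rw [hmp] at hdvd
    rcases (Nat.prime_two).eq_one_or_self_of_dvd _ hdvd with h1 | h2
    · exact absurd h1 hne1
    · exact h2
  have hle : ℚ⟮x⟯ ≤ cyclo 3 := by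
    rw [IntermediateField.adjoin_le_iff]
    rintro y rfl
    exact hxC
  have heq : ℚ⟮x⟯ = cyclo 3 := by
    apply IntermediateField.eq_of_le_of_finrank_le hle
    rw [IntermediateField.adjoin.finrank hint, hdeg2, cyclo3_finrank]
  rw [← heq, IntermediateField.adjoin_le_iff]
  rintro y rfl
  exact hxK


noncomputable def Fp : Polynomial ℤ_[461] := X ^ 10 - C 21

lemma exists_root (a : ℤ) (h1 : (461:ℤ) ∣ a ^ 10 - 21) (h2 : ¬ (461:ℤ) ∣ 10 * a ^ 9) :
    ∃ z : ℤ_[461], z ^ 10 = 21 ∧ (PadicInt.toZMod z) = ((a : ZMod 461)) := by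
  have heval : Fp.eval (a : ℤ_[461]) = ((a ^ 10 - 21 : ℤ) : ℤ_[461]) := by
    simp [Fp]
  have hder : Fp.derivative = C 10 * X ^ 9 := by
    simp [Fp]; rw [← C_1, ← C_add]; norm_num
  have hdeval : Fp.derivative.eval (a : ℤ_[461]) = ((10 * a ^ 9 : ℤ) : ℤ_[461]) := by
    rw [hder]; simp
  have hnorm1 : ‖Fp.derivative.eval (a : ℤ_[461])‖ = 1 := by
    rw [hdeval]
    have hle : ‖((10 * a ^ 9 : ℤ) : ℤ_[461])‖ ≤ 1 := PadicInt.norm_le_one _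
    have hlt : ¬ ‖((10 * a ^ 9 : ℤ) : ℤ_[461])‖ < 1 := by
      rw [PadicInt.norm_int_lt_one_iff_dvd]
      exact_mod_cast h2
    linarith [lt_or_eq_of_le hle |>.resolve_left hlt]
  have hmain : ‖Fp.eval (a : ℤ_[461])‖ < ‖Fp.derivative.eval (a : ℤ_[461])‖ ^ 2 := by
    rw [heval, hnorm1, one_pow]
    rw [PadicInt.norm_int_lt_one_iff_dvd]
    exact_mod_cast h1
  obtain ⟨z, hz0, hzlt, -, -⟩ := hensels_lemma hmain
  refine ⟨z, ?_, ?_⟩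
  · have : z ^ 10 - 21 = 0 := by simpa [Fp] using hz0
    linear_combination this
  · rw [show Polynomial.aeval (a : ℤ_[461]) (derivative Fp) = Polynomial.eval (a : ℤ_[461]) (derivative Fp) from rfl, hnorm1] at hzlt
    have hdvd : (461 : ℤ_[461]) ∣ z - a := (PadicInt.norm_lt_one_iff_dvd _).mp (by exact_mod_cast hzlt)
    have : PadicInt.toZMod (z - (a : ℤ_[461])) = 0 := by
      rw [← RingHom.mem_ker, PadicInt.ker_toZMod, PadicInt.maximalIdeal_eq_span_p,
        Ideal.mem_span_singleton]
      exact_mod_cast hdvd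
    have := sub_eq_zero.mp (by simpa using this)
    simpa using this


def A : Fin 10 → ℤ := ![34, 52, 65, 188, 226, 235, 273, 396, 409, 427]

lemma hA1 (i : Fin 10) : (461:ℤ) ∣ (A i) ^ 10 - 21 := by
  fin_cases i <;> · show (461:ℤ) ∣ _; norm_num [A]

lemma hA2 (i : Fin 10) : ¬ (461:ℤ) ∣ 10 * (A i) ^ 9 := by
  fin_cases i <;> · show ¬ (461:ℤ) ∣ _; norm_num [A]

lemma hAinj : Function.Injective (fun i => ((A i : ℤ) : ZMod 461)) := by
  decide

noncomputable def Z : Fin 10 → ℤ_[461] := fun i => (exists_root (A i) (hA1 i) (hA2 i)).choose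

lemma hZpow (i : Fin 10) : (Z i) ^ 10 = 21 := (exists_root (A i) (hA1 i) (hA2 i)).choose_spec.1

lemma hZinj : Function.Injective Z := by
  intro i j hij
  apply hAinj
  have hi := (exists_root (A i) (hA1 i) (hA2 i)).choose_spec.2
  have hj := (exists_root (A j) (hA1 j) (hA2 j)).choose_spec.2
  show ((A i : ℤ) : ZMod 461) = ((A j : ℤ) : ZMod 461)
  rw [← hi, ← hj]
  exact congrArg _ hij

noncomputable def G : Polynomial ℚ := X ^ 10 - C 21

lemma G_splits : (G.map (algebraMap ℚ ℚ_[461])).Splits := by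
  classical
  rw [splits_iff_card_roots]
  have hmap : G.map (algebraMap ℚ ℚ_[461]) = X ^ 10 - C 21 := by
    rw [G, Polynomial.map_sub, Polynomial.map_pow, Polynomial.map_X, Polynomial.map_C]
    norm_num
  have hnd : (G.map (algebraMap ℚ ℚ_[461])).natDegree = 10 := by
    rw [hmap]
    compute_degree!
  have hne : G.map (algebraMap ℚ ℚ_[461]) ≠ 0 := by
    intro h
    rw [h, natDegree_zero] at hnd
    exact absurd hnd (by norm_num)
  -- the ten roots
  have hroot : ∀ i : Fin 10, IsRoot (G.map (algebraMap ℚ ℚ_[461])) ((Z i : ℤ_[461]) : ℚ_[461]) := by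
    intro i
    rw [hmap]
    have : ((Z i : ℤ_[461]) : ℚ_[461]) ^ 10 = 21 := by
      rw [← PadicInt.coe_pow, hZpow i]
      exact_mod_cast PadicInt.coe_natCast 21
    rw [IsRoot, eval_sub, eval_pow, eval_X, eval_C, this, sub_self]
  have hinj : Function.Injective (fun i : Fin 10 => ((Z i : ℤ_[461]) : ℚ_[461])) := by
    intro i j h
    exact hZinj (Subtype.coe_injective h)
  have hsub : Finset.image (fun i : Fin 10 => ((Z i : ℤ_[461]) : ℚ_[461])) Finset.univ
      ⊆ (G.map (algebraMap ℚ ℚ_[461])).roots.toFinset := by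
    intro x hx
    simp only [Finset.mem_image] at hx
    obtain ⟨i, -, rfl⟩ := hx
    rw [Multiset.mem_toFinset, mem_roots hne]
    exact hroot i
  have h10 : 10 ≤ (G.map (algebraMap ℚ ℚ_[461])).roots.card := by
    calc (10 : ℕ) = (Finset.image (fun i : Fin 10 => ((Z i : ℤ_[461]) : ℚ_[461])) Finset.univ).card := by
          rw [Finset.card_image_of_injective _ hinj, Finset.card_univ, Fintype.card_fin]
      _ ≤ (G.map (algebraMap ℚ ℚ_[461])).roots.toFinset.card := Finset.card_le_card hsub
      _ ≤ (G.map (algebraMap ℚ ℚ_[461])).roots.card := (G.map (algebraMap ℚ ℚ_[461])).roots.toFinset_card_le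
  have hle : (G.map (algebraMap ℚ ℚ_[461])).roots.card ≤ 10 := by
    rw [← hnd]
    exact (G.map (algebraMap ℚ ℚ_[461])).card_roots'
  omega

lemma G_ne_zero : G ≠ 0 := by
  intro h
  have h10 : G.natDegree = 10 := by rw [G]; compute_degree!
  rw [h, natDegree_zero] at h10
  norm_num at h10

lemma alg21 : (algebraMap ℚ ℂ) 21 = 21 := by norm_num

lemma kummer_eq_adjoin_rootSet : kummer 21 10 = IntermediateField.adjoin ℚ (G.rootSet ℂ) := by
  rw [kummer]
  congr 1
  ext z
  rw [Polynomial.mem_rootSet]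
  constructor
  · intro hz
    refine ⟨G_ne_zero, ?_⟩
    simp only [G, map_sub, map_pow, Polynomial.aeval_X, Polynomial.aeval_C, alg21]
    rw [Set.mem_setOf_eq] at hz
    have : z ^ 10 = ((21:ℤ):ℂ) := hz
    push_cast at this
    rw [this, sub_self]
  · rintro ⟨-, hz⟩
    simp only [G, map_sub, map_pow, Polynomial.aeval_X, Polynomial.aeval_C, alg21] at hz
    show z ^ 10 = ((21:ℤ):ℂ)
    push_cast
    linear_combination hz

instance kummer_splittingField : G.IsSplittingField ℚ (kummer 21 10) := by
  rw [kummer_eq_adjoin_rootSet]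
  exact IntermediateField.adjoin_rootSet_isSplittingField (IsAlgClosed.splits (G.map (algebraMap ℚ ℂ)))

noncomputable def φ : (kummer 21 10) →ₐ[ℚ] ℚ_[461] :=
  Polynomial.IsSplittingField.lift (kummer 21 10) G G_splits

lemma no_sqrt_neg3 (w : ℚ_[461]) : w ^ 2 ≠ -3 := by
  intro hw
  have h3 : ‖(-3 : ℚ_[461])‖ = 1 := by
    have : ((-3 : ℤ) : ℚ_[461]) = -3 := by push_cast; ring
    rw [← this]
    have hle : ‖((-3 : ℤ) : ℚ_[461])‖ ≤ 1 := Padic.norm_int_le_one _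
    have hlt : ¬ ‖((-3 : ℤ) : ℚ_[461])‖ < 1 := by
      rw [Padic.norm_intCast_lt_one_iff]
      norm_num
    linarith [lt_or_eq_of_le hle |>.resolve_left hlt]
  have hw1 : ‖w‖ = 1 := by
    have : ‖w‖ ^ 2 = 1 := by rw [← norm_pow, hw, h3]
    nlinarith [norm_nonneg w]
  set w' : ℤ_[461] := ⟨w, hw1.le⟩ with hw'
  have hw2 : w' ^ 2 = -3 := by
    apply Subtype.coe_injective
    push_cast [hw']
    exact hw
  have := congrArg PadicInt.toZMod hw2
  rw [map_pow, map_neg, map_ofNat] at this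
  have hall : ∀ u : ZMod 461, u ^ 2 ≠ -3 := by
    set_option maxRecDepth 4000 in decide
  exact hall _ this


noncomputable def ζ70 : ℂ := Complex.exp (2 * Real.pi * Complex.I / (70:ℕ))
noncomputable def αC : ℂ := ((21:ℝ) ^ ((70:ℝ)⁻¹ : ℝ) : ℝ)

lemma zeta70_prim : IsPrimitiveRoot ζ70 70 := Complex.isPrimitiveRoot_exp 70 (by norm_num)

lemma alphaC_pow : αC ^ 70 = (21 : ℂ) := by
  rw [αC]
  have : ((21:ℝ) ^ ((70:ℝ)⁻¹ : ℝ)) ^ (70:ℕ) = 21 := by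
    rw [← Real.rpow_natCast ((21:ℝ) ^ ((70:ℝ)⁻¹ : ℝ)) 70, ← Real.rpow_mul (by norm_num)]
    norm_num
  rw [← Complex.ofReal_pow, this]
  norm_num

lemma alphaC_ne : αC ≠ 0 := by
  rw [αC]
  exact Complex.ofReal_ne_zero.mpr (by positivity)

lemma alphaC_mem : αC ∈ kummer 21 70 := by
  apply IntermediateField.subset_adjoin
  show αC ^ 70 = ((21:ℤ) : ℂ)
  rw [alphaC_pow]; norm_num

lemma zeta70_mem : ζ70 ∈ kummer 21 70 := by
  have h1 : αC * ζ70 ∈ kummer 21 70 := by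
    apply IntermediateField.subset_adjoin
    show (αC * ζ70) ^ 70 = ((21:ℤ) : ℂ)
    rw [mul_pow, alphaC_pow, zeta70_prim.pow_eq_one]
    norm_num
  have : ζ70 = (αC * ζ70) * αC⁻¹ := by
    rw [mul_comm αC ζ70, mul_assoc, mul_inv_cancel₀ alphaC_ne, mul_one]
  rw [this]
  exact mul_mem h1 (inv_mem alphaC_mem)

noncomputable def ζ7 : ℂ := Complex.exp (2 * Real.pi * Complex.I / (7:ℕ))

lemma zeta7_prim : IsPrimitiveRoot ζ7 7 := Complex.isPrimitiveRoot_exp 7 (by norm_num)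

lemma zeta7_eq : ζ7 = ζ70 ^ 10 := by
  rw [ζ7, ζ70, ← Complex.exp_nat_mul]
  congr 1
  push_cast
  ring

lemma zeta7_mem : ζ7 ∈ kummer 21 70 := zeta7_eq ▸ pow_mem zeta70_mem 10

lemma sqrt21_mem : (αC ^ 35) ∈ kummer 21 70 := pow_mem alphaC_mem 35

lemma sqrt21_sq : (αC ^ 35) ^ 2 = 21 := by rw [← pow_mul]; exact_mod_cast alphaC_pow

noncomputable def χ : MulChar (ZMod 7) ℂ := (quadraticChar (ZMod 7)).ringHomComp (Int.castRingHom ℂ)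

lemma zeta7_pow7 : ζ7 ^ 7 = 1 := zeta7_prim.pow_eq_one

noncomputable def ψ : AddChar (ZMod 7) ℂ := AddChar.zmodChar 7 zeta7_pow7

lemma ψ_prim : ψ.IsPrimitive := by
  have := AddChar.zmodChar_primitive_of_primitive_root 7 zeta7_prim
  exact this

lemma χ_ne_one : χ ≠ 1 := by
  intro h
  have h3 : IsUnit (3 : ZMod 7) := by decide
  have : χ 3 = 1 := by rw [h, ← h3.unit_spec, MulChar.one_apply_coe]
  have h2 : χ 3 = -1 := by
    rw [χ, MulChar.ringHomComp_apply]
    have : quadraticChar (ZMod 7) 3 = -1 := by decide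
    rw [this]; norm_num
  rw [this] at h2
  norm_num at h2

lemma χ_quad : χ.IsQuadratic := (quadraticChar_isQuadratic (ZMod 7)).comp _

lemma gauss_sq : (gaussSum χ ψ) ^ 2 = -7 := by
  rw [gaussSum_sq χ_ne_one χ_quad ψ_prim]
  have h1 : χ (-1) = -1 := by
    rw [χ, MulChar.ringHomComp_apply]
    have : quadraticChar (ZMod 7) (-1) = -1 := by decide
    rw [this]; norm_num
  rw [h1, ZMod.card]
  norm_num

lemma gauss_mem : gaussSum χ ψ ∈ kummer 21 70 := by
  rw [gaussSum]
  apply sum_mem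
  intro a _
  apply mul_mem
  · rw [χ, MulChar.ringHomComp_apply]
    exact intCast_mem _ _
  · rw [ψ, AddChar.zmodChar_apply]
    exact pow_mem zeta7_mem _

lemma I_sqrt3_mem : Complex.I * (Real.sqrt 3 : ℂ) ∈ kummer 21 70 := by
  set u : ℂ := gaussSum χ ψ * (αC ^ 35) / 7 with hu
  have humem : u ∈ kummer 21 70 := div_mem (mul_mem gauss_mem sqrt21_mem) (ofNat_mem _ 7)
  have husq : u ^ 2 = -3 := by
    rw [hu, div_pow, mul_pow, gauss_sq, sqrt21_sq]
    norm_num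
  have hI : (Complex.I * (Real.sqrt 3 : ℂ)) ^ 2 = -3 := by
    rw [mul_pow, Complex.I_sq]
    have : ((Real.sqrt 3 : ℝ) : ℂ) ^ 2 = ((3:ℝ) : ℂ) := by
      rw [← Complex.ofReal_pow, Real.sq_sqrt (by norm_num)]
    rw [this]
    norm_num
  have : (u - Complex.I * (Real.sqrt 3 : ℂ)) * (u + Complex.I * (Real.sqrt 3 : ℂ)) = 0 := by
    ring_nf
    linear_combination husq - hI
  rcases mul_eq_zero.mp this with h | h
  · rw [sub_eq_zero] at h
    exact h ▸ humem
  · have : Complex.I * (Real.sqrt 3 : ℂ) = -u := by linear_combination h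
    rw [this]
    exact neg_mem humem

lemma part1 : cyclo 3 ⊓ kummer 21 10 = ⊥ := by
  by_contra h
  have hle := cyclo3_le_of_inf_ne_bot h
  set ζ := Complex.exp (2 * Real.pi * Complex.I / (3:ℕ)) with hζdef
  have hζK : ζ ∈ kummer 21 10 := hle (IntermediateField.subset_adjoin ℚ _ rfl)
  have h3 : ζ ^ 3 = 1 := zeta3_prim.pow_eq_one
  have hne : ζ ≠ 1 := zeta3_prim.ne_one (by norm_num)
  have hrel : ζ ^ 2 + ζ + 1 = 0 := by
    rcases mul_eq_zero.mp (show (ζ - 1) * (ζ ^ 2 + ζ + 1) = 0 by linear_combination h3) with hc | hc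
    · exact absurd (sub_eq_zero.mp hc) hne
    · exact hc
  set x : kummer 21 10 := ⟨ζ, hζK⟩ with hxdef
  have hxrel : x ^ 2 + x + 1 = 0 := by
    apply Subtype.coe_injective
    have : ((x ^ 2 + x + 1 : kummer 21 10) : ℂ) = ζ ^ 2 + ζ + 1 := by
      push_cast [hxdef]
      ring
    show ((x ^ 2 + x + 1 : kummer 21 10) : ℂ) = ((0 : kummer 21 10) : ℂ)
    rw [this, hrel]
    rfl
  have hy : (φ x) ^ 2 + (φ x) + 1 = 0 := by
    have := congrArg φ hxrel
    simpa using this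
  exact no_sqrt_neg3 (2 * φ x + 1) (by linear_combination (4 : ℚ_[461]) * hy)

lemma part2 : cyclo 3 ⊓ kummer 21 70 = cyclo 3 := by
  apply inf_eq_left.mpr
  rw [cyclo3_eq_adjoin]
  exact IntermediateField.adjoin_le_iff.mpr (Set.singleton_subset_iff.mpr I_sqrt3_mem)

lemma cyclo3_ne_bot : cyclo 3 ≠ ⊥ := by
  intro hb
  have hmem : Complex.I * (Real.sqrt 3 : ℂ) ∈ cyclo 3 := by
    rw [cyclo3_eq_adjoin]
    exact IntermediateField.subset_adjoin ℚ _ rfl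
  rw [hb, IntermediateField.mem_bot] at hmem
  obtain ⟨q, hq⟩ := hmem
  have him := congrArg Complex.im hq
  have h0 : (Real.sqrt 3 : ℝ) ≠ 0 := by positivity
  simp [Complex.mul_im] at him
  exact h0 him.symm

theorem stmt5 :
    cyclo 3 ⊓ kummer 21 10 = ⊥ ∧
    cyclo 3 ⊓ kummer 21 70 = cyclo 3 ∧
    cyclo 3 = IntermediateField.adjoin ℚ {(Complex.I * (Real.sqrt 3 : ℂ) : ℂ)} ∧
    cyclo 3 ⊓ kummer 21 (7 * 10) ≠ cyclo 3 ⊓ kummer 21 10 := by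
  have h70 : kummer 21 (7 * 10) = kummer 21 70 := by norm_num
  refine ⟨part1, part2, cyclo3_eq_adjoin, ?_⟩
  rw [h70, part1, part2]
  exact cyclo3_ne_bot
end

section
/- Let d ≥ 1 be an integer and let q be a prime with q ∤ 2d. Then [Q(ζ_d, ζ_q, 4^{1/q}) : Q] = φ(d)·q·(q−1), where φ is Euler's totient function. -/
open Polynomial IntermediateField
set_option maxHeartbeats 1000000
set_option synthInstance.maxHeartbeats 400000

lemma rat_no_qth_root_of_two {q : ℕ} (hq : q.Prime) : ∀ b : ℚ, b ^ q ≠ 2 := by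
  intro b hb
  have hb0 : b ≠ 0 := by
    intro h; rw [h] at hb; simp [zero_pow hq.ne_zero] at hb
  have h1 : padicValRat 2 (b ^ q) = padicValRat 2 2 := by rw [hb]
  have h2 : padicValRat 2 ((2:ℕ):ℚ) = 1 := padicValRat.self (by norm_num)
  rw [padicValRat.pow b, show ((2:ℚ)) = ((2:ℕ):ℚ) by norm_num, h2] at h1
  have : (q : ℤ) ∣ 1 := ⟨padicValRat 2 b, h1.symm⟩
  have h3 := Int.le_of_dvd one_pos this
  have := hq.two_le
  omega

lemma irr_X_pow_q_sub_two {q : ℕ} (hq : q.Prime) :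
    Irreducible (X ^ q - C (2 : ℚ)) :=
  X_pow_sub_C_irreducible_of_prime hq (rat_no_qth_root_of_two hq)

lemma no_qth_root_of_four (d q : ℕ) (hd : 1 ≤ d) (hq : q.Prime) (hq2 : q ≠ 2)
    (hqd : ¬ q ∣ d) : ∀ b : ↥(cyclo (d * q)), b ^ q ≠ 4 := by
  have hNpos : 0 < d * q := Nat.mul_pos hd hq.pos
  set N := d * q with hNdef
  set ζ : ℂ := Complex.exp (2 * Real.pi * Complex.I / N) with hζdef
  have hζ : IsPrimitiveRoot ζ N := Complex.isPrimitiveRoot_exp N hNpos.ne'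
  set K : IntermediateField ℚ ℂ := cyclo N with hK
  have hζK : ζ ∈ K := IntermediateField.subset_adjoin ℚ _ rfl
  set n : ℕ+ := ⟨N, hNpos⟩ with hn
  have hζint : IsIntegral ℚ ζ :=
    ⟨X ^ N - C 1, monic_X_pow_sub_C _ hNpos.ne', by simp [hζ.pow_eq_one]⟩
  haveI hcyc : IsCyclotomicExtension {(n:ℕ)} ℚ K := by
    have H : K.toSubalgebra = Algebra.adjoin ℚ {ζ} :=
      adjoin_simple_toSubalgebra_of_isAlgebraic hζint.isAlgebraic
    have h2 : IsCyclotomicExtension {(n:ℕ)} ℚ (Algebra.adjoin ℚ ({ζ} : Set ℂ)) :=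
      (show IsPrimitiveRoot ζ ((n : ℕ+) : ℕ) from hζ).adjoin_isCyclotomicExtension ℚ
    exact IsCyclotomicExtension.equiv _ _ _ (h := h2) (Subalgebra.equivOfEq _ _ H.symm)
  haveI : FiniteDimensional ℚ K := IsCyclotomicExtension.finiteDimensional {(n:ℕ)} ℚ K
  haveI : IsGalois ℚ ↥K := IsCyclotomicExtension.isGalois {(n:ℕ)} ℚ ↥K
  have hcomm : ∀ σ τ : ↥K ≃ₐ[ℚ] ↥K, σ * τ = τ * σ := by
    intro σ τ
    have e := IsCyclotomicExtension.autEquivPow (n := (n:ℕ)) ↥K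
      (Polynomial.cyclotomic.irreducible_rat hNpos)
    apply e.injective
    rw [map_mul, map_mul, mul_comm]
  set c : ↥K ≃ₐ[ℚ] ↥K :=
    (AlgEquiv.restrictScalars ℚ Complex.conjAe).restrictNormal ↥K with hcdef
  have hc : ∀ x : ↥K, (↑(c x) : ℂ) = (starRingEnd ℂ) ↑x := fun x =>
    AlgEquiv.restrictNormal_commutes _ ↥K x
  have hζd : IsPrimitiveRoot (ζ ^ d) q := IsPrimitiveRoot.pow hNpos hζ rfl
  set ζq : ↥K := (⟨ζ, hζK⟩ : ↥K) ^ d with hζqdef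
  have hζqc : (↑ζq : ℂ) = ζ ^ d := rfl
  have hζqK : IsPrimitiveRoot ζq q := by
    apply IsPrimitiveRoot.of_map_of_injective (f := algebraMap ↥K ℂ)
      ?_ (algebraMap ↥K ℂ).injective
    rw [show algebraMap ↥K ℂ ζq = ζ ^ d from rfl]
    exact hζd
  haveI : NeZero q := ⟨hq.ne_zero⟩
  have hroot : ∀ v : ↥K, v ^ q = 1 → ∃ i : ℕ, ζq ^ i = v := by
    intro v hv
    obtain ⟨i, _, hi⟩ := hζqK.eq_pow_of_pow_eq_one hv
    exact ⟨i, hi⟩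
  set E : IntermediateField ℚ ↥K := ℚ⟮ζq⟯ with hE
  have hζqE : ζq ∈ E := IntermediateField.mem_adjoin_simple_self ℚ ζq
  set q' : ℕ+ := ⟨q, hq.pos⟩ with hq'
  have hζqint : IsIntegral ℚ ζq :=
    ⟨X ^ q - C 1, monic_X_pow_sub_C _ hq.ne_zero, by simp [hζqK.pow_eq_one]⟩
  haveI : IsCyclotomicExtension {(q':ℕ)} ℚ ↥E := by
    have H : E.toSubalgebra = Algebra.adjoin ℚ {ζq} :=
      adjoin_simple_toSubalgebra_of_isAlgebraic hζqint.isAlgebraic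
    have h2 : IsCyclotomicExtension {(q':ℕ)} ℚ (Algebra.adjoin ℚ ({ζq} : Set ↥K)) :=
      (show IsPrimitiveRoot ζq ((q' : ℕ+) : ℕ) from hζqK).adjoin_isCyclotomicExtension ℚ
    exact IsCyclotomicExtension.equiv _ _ _ (h := h2) (Subalgebra.equivOfEq _ _ H.symm)
  have hErank : Module.finrank ℚ ↥E = q - 1 := by
    rw [IsCyclotomicExtension.finrank (n := (q':ℕ)) ↥E
      (Polynomial.cyclotomic.irreducible_rat hq.pos)]
    exact Nat.totient_prime hq
  intro b hb
  have h2K : (2 : ↥K) ≠ 0 := two_ne_zero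
  have hb0 : b ≠ 0 := by
    intro h; rw [h, zero_pow hq.ne_zero] at hb
    exact (by norm_num : (4:↥K) ≠ 0) hb.symm
  obtain ⟨m, hm⟩ := hq.odd_of_ne_two hq2
  obtain ⟨γ, hγdef⟩ : ∃ γ : ↥K, γ = 2 / b ^ m := ⟨_, rfl⟩
  have hγq : γ ^ q = 2 := by
    rw [hγdef, div_pow]
    have h1 : (b ^ m) ^ q = 2 ^ (2 * m) := by
      rw [← pow_mul, mul_comm m q, pow_mul, hb,
        show (4:↥K) = 2 ^ 2 by norm_num, ← pow_mul]
    rw [h1, hm, pow_succ]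
    exact mul_div_cancel_left₀ 2 (pow_ne_zero _ h2K)
  have hγ0 : γ ≠ 0 := by
    intro h; rw [h, zero_pow hq.ne_zero] at hγq; exact h2K hγq.symm
  have hfix : ∀ σ : ↥K ≃ₐ[ℚ] ↥K, σ ζq = ζq → σ γ = γ := by
    intro σ hσζ
    have hfixroot : ∀ v : ↥K, v ^ q = 1 → σ v = v := by
      intro v hv
      obtain ⟨i, hi⟩ := hroot v hv
      rw [← hi, map_pow, hσζ]
    obtain ⟨u, hu⟩ : ∃ u : ↥K, u = σ γ / γ := ⟨_, rfl⟩
    have hσγ : σ γ = u * γ := by rw [hu]; exact (div_mul_cancel₀ _ hγ0).symm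
    have huq : u ^ q = 1 := by
      rw [hu, div_pow, ← map_pow, hγq, map_ofNat]
      exact div_self h2K
    have hu0 : u ≠ 0 := by
      intro h; rw [h, zero_pow hq.ne_zero] at huq; exact zero_ne_one huq
    obtain ⟨w, hw⟩ : ∃ w : ↥K, w = c γ / γ := ⟨_, rfl⟩
    have hcγ : c γ = w * γ := by rw [hw]; exact (div_mul_cancel₀ _ hγ0).symm
    have hwq : w ^ q = 1 := by
      rw [hw, div_pow, ← map_pow, hγq, map_ofNat]
      exact div_self h2K
    have hw0 : w ≠ 0 := by
      intro h; rw [h, zero_pow hq.ne_zero] at hwq; exact zero_ne_one hwq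
    have hcu : c u = u⁻¹ := by
      have h1 : ((u : ℂ)) ^ q = 1 := by
        exact_mod_cast congrArg (fun x : ↥K => (x : ℂ)) huq
      have habs : ‖(↑u : ℂ)‖ = 1 := by
        have h2 : ‖(↑u : ℂ)‖ ^ q = 1 := by rw [← norm_pow, h1, norm_one]
        rcases lt_trichotomy ‖(↑u : ℂ)‖ 1 with h | h | h
        · have := pow_lt_one₀ (norm_nonneg _) h hq.ne_zero
          rw [h2] at this; exact absurd this (lt_irrefl 1)
        · exact h
        · have := one_lt_pow₀ h hq.ne_zero
          rw [h2] at this; exact absurd this (lt_irrefl 1)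
      apply Subtype.ext
      rw [hc u, show ((u⁻¹ : ↥K) : ℂ) = (↑u : ℂ)⁻¹ by
        exact_mod_cast rfl]
      exact (Complex.inv_eq_conj habs).symm
    have hσu : σ u = u := hfixroot u huq
    have hσw : σ w = w := hfixroot w hwq
    have hcomm' : c (σ γ) = σ (c γ) := by
      calc c (σ γ) = (c * σ) γ := (AlgEquiv.mul_apply _ _ _).symm
      _ = (σ * c) γ := by rw [hcomm c σ]
      _ = σ (c γ) := AlgEquiv.mul_apply _ _ _
    rw [hσγ, hcγ, map_mul, map_mul, hcu, hσw, hcγ, hσγ] at hcomm'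
    have hu2 : u ^ 2 = 1 := by
      have h8 : u * (u⁻¹ * (w * γ)) = u * (w * (u * γ)) := by rw [hcomm']
      rw [← mul_assoc, mul_inv_cancel₀ hu0, one_mul] at h8
      have h9 : (w * γ) * 1 = (w * γ) * u ^ 2 := by rw [mul_one]; nth_rewrite 1 [h8]; ring
      exact (mul_left_cancel₀ (mul_ne_zero hw0 hγ0) h9).symm
    have hu1 : u = 1 := by
      have h9 : u ^ (2 * m + 1) = 1 := hm ▸ huq
      rw [pow_succ, pow_mul, hu2, one_pow, one_mul] at h9
      exact h9
    rw [hσγ, hu1, one_mul]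
  have hγE : γ ∈ E := by
    rw [← IsGalois.fixedField_fixingSubgroup E]
    exact fun σ => hfix σ.1 ((IntermediateField.mem_fixingSubgroup_iff E σ.1).mp σ.2 ζq hζqE)
  have haev : (Polynomial.aeval γ) (X ^ q - C (2:ℚ)) = 0 := by
    rw [map_sub, map_pow, aeval_X, aeval_C, hγq]
    norm_num
  have hmin : minpoly ℚ γ = X ^ q - C (2:ℚ) :=
    (minpoly.eq_of_irreducible_of_monic (irr_X_pow_q_sub_two hq)
      haev (monic_X_pow_sub_C _ hq.ne_zero)).symm
  have hγ'map : algebraMap ↥E ↥K (⟨γ, hγE⟩ : ↥E) = γ := rfl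
  have hminE : minpoly ℚ (⟨γ, hγE⟩ : ↥E) = X ^ q - C (2:ℚ) := by
    have h := minpoly.algebraMap_eq (A := ℚ) (algebraMap ↥E ↥K).injective (⟨γ, hγE⟩ : ↥E)
    rw [hγ'map] at h
    exact h.symm.trans hmin
  have hdvd : (minpoly ℚ (⟨γ, hγE⟩ : ↥E)).natDegree ∣ Module.finrank ℚ ↥E :=
    minpoly.degree_dvd (IsIntegral.of_finite ℚ _)
  rw [hminE, natDegree_X_pow_sub_C, hErank] at hdvd
  have hq3 := hq.two_le
  have := Nat.le_of_dvd (by omega) hdvd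
  omega

theorem stmt13 (d : ℕ) (hd : 1 ≤ d) (q : ℕ) (hq : q.Prime) (hqd : ¬ q ∣ 2 * d) :
    Module.finrank ℚ ↥(cyclo d ⊔ kummer 4 q) = Nat.totient d * q * (q - 1) := by
  have hq2 : q ≠ 2 := fun h => hqd (by rw [h]; exact Dvd.intro d rfl)
  have hqd' : ¬ q ∣ d := fun h => hqd (h.mul_left 2)
  have hNpos : 0 < d * q := Nat.mul_pos hd hq.pos
  set N := d * q with hN
  set ζ : ℂ := Complex.exp (2 * Real.pi * Complex.I / N) with hζdef
  have hζ : IsPrimitiveRoot ζ N := Complex.isPrimitiveRoot_exp N hNpos.ne'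
  set K : IntermediateField ℚ ℂ := cyclo N with hK
  have hζK : ζ ∈ K := IntermediateField.subset_adjoin ℚ _ rfl
  set n : ℕ+ := ⟨N, hNpos⟩ with hn
  have hζint : IsIntegral ℚ ζ :=
    ⟨X ^ N - C 1, monic_X_pow_sub_C _ hNpos.ne', by simp [hζ.pow_eq_one]⟩
  haveI hcyc : IsCyclotomicExtension {(n:ℕ)} ℚ K := by
    have H : K.toSubalgebra = Algebra.adjoin ℚ {ζ} :=
      adjoin_simple_toSubalgebra_of_isAlgebraic hζint.isAlgebraic
    have h2 : IsCyclotomicExtension {(n:ℕ)} ℚ (Algebra.adjoin ℚ ({ζ} : Set ℂ)) :=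
      (show IsPrimitiveRoot ζ ((n : ℕ+) : ℕ) from hζ).adjoin_isCyclotomicExtension ℚ
    exact IsCyclotomicExtension.equiv _ _ _ (h := h2) (Subalgebra.equivOfEq _ _ H.symm)
  haveI : FiniteDimensional ℚ K := IsCyclotomicExtension.finiteDimensional {(n:ℕ)} ℚ K
  -- the root α
  set α : ℂ := (((4:ℝ) ^ ((q:ℝ)⁻¹) : ℝ) : ℂ) with hα
  have hαq : α ^ q = 4 := by
    rw [hα, ← Complex.ofReal_pow, Real.rpow_inv_natCast_pow (by norm_num) hq.ne_zero]
    norm_num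
  have hα0 : α ≠ 0 := by
    intro h; rw [h, zero_pow hq.ne_zero] at hαq; norm_num at hαq
  have hζd : IsPrimitiveRoot (ζ ^ d) q := IsPrimitiveRoot.pow hNpos hζ rfl
  haveI : NeZero q := ⟨hq.ne_zero⟩
  have hrootK : ∀ z : ℂ, z ^ q = 1 → z ∈ K := by
    intro z hz
    obtain ⟨i, _, hi⟩ := hζd.eq_pow_of_pow_eq_one hz
    rw [← hi]; exact pow_mem (pow_mem hζK d) i
  have hd0 : (d:ℂ) ≠ 0 := Nat.cast_ne_zero.2 (by omega)
  have hq0 : (q:ℂ) ≠ 0 := Nat.cast_ne_zero.2 hq.ne_zero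
  have hNc : (N:ℂ) = (d:ℂ) * q := by rw [hN]; push_cast; ring
  have hζdK : Complex.exp (2 * Real.pi * Complex.I / d) ∈ K := by
    have h1 : Complex.exp (2 * Real.pi * Complex.I / d) = ζ ^ q := by
      rw [hζdef, ← Complex.exp_nat_mul]
      congr 1
      rw [hNc]
      field_simp [hNc]
    rw [h1]; exact pow_mem hζK q
  have hαk : α ∈ kummer 4 q :=
    IntermediateField.subset_adjoin ℚ _ (by show α ^ q = _; rw [hαq]; norm_num)
  have hζqkum : ∀ z : ℂ, z ^ q = 1 → z ∈ kummer 4 q := by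
    intro z hz
    have h1 : z * α ∈ kummer 4 q := IntermediateField.subset_adjoin ℚ _
      (by show _ ^ q = _; rw [mul_pow, hz, one_mul, hαq]; norm_num)
    rw [show z = z * α / α from (mul_div_cancel_right₀ _ hα0).symm]
    exact div_mem h1 hαk
  have hζsup : ζ ∈ cyclo d ⊔ kummer 4 q := by
    have hco : Nat.Coprime q d := (hq.coprime_iff_not_dvd).2 hqd'
    set a := Nat.gcdA q d with ha
    set b := Nat.gcdB q d with hb
    have hbez : (1:ℤ) = q * a + d * b := by
      have h2 := Nat.gcd_eq_gcd_ab q d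
      rw [hco] at h2
      exact_mod_cast h2
    have hbezc : (1:ℂ) = q * a + d * b := by exact_mod_cast congrArg (Int.cast : ℤ → ℂ) hbez
    have hexp : 2 * Real.pi * Complex.I / N =
        a * (2 * Real.pi * Complex.I / d) + b * (2 * Real.pi * Complex.I / q) := by
      calc 2 * Real.pi * Complex.I / (N:ℂ)
          = (2 * Real.pi * Complex.I * ((q:ℂ) * a + (d:ℂ) * b)) / ((d:ℂ) * (q:ℂ)) := by
            rw [← hbezc, mul_one, hNc]
        _ = a * (2 * Real.pi * Complex.I / d) + b * (2 * Real.pi * Complex.I / q) := by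
            field_simp
    have hζeq : ζ = Complex.exp (2 * Real.pi * Complex.I / d) ^ (a:ℤ) *
        Complex.exp (2 * Real.pi * Complex.I / q) ^ (b:ℤ) := by
      rw [hζdef, ← Complex.exp_int_mul, ← Complex.exp_int_mul, ← Complex.exp_add, hexp]
    rw [hζeq]
    have hmem1 : Complex.exp (2 * Real.pi * Complex.I / d) ∈ cyclo d ⊔ kummer 4 q :=
      (le_sup_left : cyclo d ≤ cyclo d ⊔ kummer 4 q)
        (IntermediateField.subset_adjoin ℚ _ rfl)
    have hmemq : Complex.exp (2 * Real.pi * Complex.I / q) ∈ cyclo d ⊔ kummer 4 q := by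
      refine (le_sup_right : kummer 4 q ≤ cyclo d ⊔ kummer 4 q) (hζqkum _ ?_)
      exact (Complex.isPrimitiveRoot_exp q hq.ne_zero).pow_eq_one
    exact mul_mem (zpow_mem hmem1 _) (zpow_mem hmemq _)
  -- main field equality
  set T : IntermediateField ↥K ℂ := IntermediateField.adjoin ↥K {α} with hT
  have key : cyclo d ⊔ kummer 4 q = IntermediateField.restrictScalars ℚ T := by
    rw [hT]; erw [restrictScalars_adjoin_eq_sup (K := K) (S := {α})]
    apply le_antisymm
    · apply sup_le
      · refine le_trans ?_ le_sup_left
        rw [show cyclo d = IntermediateField.adjoin ℚ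
          {Complex.exp (2 * Real.pi * Complex.I / d)} from rfl, adjoin_le_iff]
        intro x hx
        rw [Set.mem_singleton_iff] at hx
        rw [hx]; exact hζdK
      · rw [show kummer 4 q = IntermediateField.adjoin ℚ
          {z : ℂ | z ^ q = ((4:ℤ) : ℂ)} from rfl, adjoin_le_iff]
        intro z hz
        have hz4 : z ^ q = 4 := by rw [hz]; norm_num
        have h1 : (z / α) ^ q = 1 := by rw [div_pow, hz4, hαq, div_self]; norm_num
        rw [show z = (z / α) * α from (div_mul_cancel₀ _ hα0).symm]
        exact mul_mem ((le_sup_left : K ≤ K ⊔ IntermediateField.adjoin ℚ {α}) (hrootK _ h1))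
          ((le_sup_right : IntermediateField.adjoin ℚ {α} ≤ K ⊔ IntermediateField.adjoin ℚ {α})
            (IntermediateField.subset_adjoin ℚ _ rfl))
    · apply sup_le
      · rw [hK, show cyclo N = IntermediateField.adjoin ℚ {ζ} from rfl, adjoin_le_iff]
        intro x hx
        rw [Set.mem_singleton_iff] at hx
        rw [hx]; exact hζsup
      · rw [adjoin_le_iff]
        intro x hx
        rw [Set.mem_singleton_iff] at hx
        rw [hx]
        exact (le_sup_right : kummer 4 q ≤ cyclo d ⊔ kummer 4 q) hαk
  rw [key]
  -- finrank computations
  have irr4 : Irreducible (X ^ q - C (4 : ↥K)) :=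
    X_pow_sub_C_irreducible_of_prime hq (no_qth_root_of_four d q hd hq hq2 hqd')
  have haev4 : (Polynomial.aeval α) (X ^ q - C (4 : ↥K)) = 0 := by
    rw [map_sub, map_pow, aeval_X, aeval_C, hαq, map_ofNat]
    ring
  have hαint : IsIntegral ↥K α := ⟨X ^ q - C 4, monic_X_pow_sub_C _ hq.ne_zero, haev4⟩
  have hmin4 : minpoly ↥K α = X ^ q - C 4 :=
    (minpoly.eq_of_irreducible_of_monic irr4 haev4 (monic_X_pow_sub_C _ hq.ne_zero)).symm
  have hrankT : Module.finrank ↥K ↥T = q := by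
    rw [hT, IntermediateField.adjoin.finrank hαint, hmin4, natDegree_X_pow_sub_C]
  have hrankK : Module.finrank ℚ ↥K = Nat.totient N :=
    IsCyclotomicExtension.finrank (n := (n:ℕ)) ↥K (Polynomial.cyclotomic.irreducible_rat hNpos)
  have hfin : Module.finrank ℚ ↥(IntermediateField.restrictScalars ℚ T) =
      Module.finrank ℚ ↥T := rfl
  have htower : Module.finrank ℚ ↥K * Module.finrank ↥K ↥T = Module.finrank ℚ ↥T :=
    Module.finrank_mul_finrank ℚ ↥K ↥T
  rw [hfin, ← htower, hrankK, hrankT, hN,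
    Nat.totient_mul ((Nat.coprime_comm).1 ((hq.coprime_iff_not_dvd).2 hqd')),
    Nat.totient_prime hq]
  ring
end

section
/- For every integer n ≥ 1, the Genocchi number G_n = 2(1 − 2^n)·B_n is an integer, where B_n denotes the n-th Bernoulli number. -/
open Finset

section aux

variable {p : ℕ} [hp : Fact p.Prime]

private lemma add_two_le_three_pow {v : ℕ} (hv : 1 ≤ v) : v + 2 ≤ 3 ^ v := by
  induction v with
  | zero => omega
  | succ w ih =>
    rcases Nat.eq_zero_or_pos w with rfl | hw
    · norm_num
    · have h1 := ih hw
      have h3 : 3 ^ (w + 1) = 3 * 3 ^ w := by ring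
      omega

private lemma val_add_one_le {k : ℕ} (hk : 1 ≤ k) : padicValNat p k + 1 ≤ k := by
  have h2 : p ^ padicValNat p k ≤ k := Nat.le_of_dvd (by omega) pow_padicValNat_dvd
  have h3 : 2 ^ padicValNat p k ≤ p ^ padicValNat p k :=
    Nat.pow_le_pow_left hp.out.two_le _
  have h4 := Nat.lt_two_pow_self (n := padicValNat p k)
  omega

private lemma val_add_two_le (hp2 : p ≠ 2) {k : ℕ} (hk : 2 ≤ k) :
    padicValNat p k + 2 ≤ k := by
  have hp3 : 3 ≤ p := by have := hp.out.two_le; omega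
  rcases Nat.eq_zero_or_pos (padicValNat p k) with h0 | h1
  · omega
  · have h2 : p ^ padicValNat p k ≤ k := Nat.le_of_dvd (by omega) pow_padicValNat_dvd
    have h3 : 3 ^ padicValNat p k ≤ p ^ padicValNat p k :=
      Nat.pow_le_pow_left hp3 _
    have h4 := add_two_le_three_pow h1
    omega

private lemma norm_pow_div {k : ℕ} (hk : k ≠ 0) {c : ℕ}
    (hc : c + padicValNat p k ≤ k) :
    padicNorm p ((p : ℚ) ^ k / (k : ℚ)) ≤ (p : ℚ) ^ (-(c : ℤ)) := by
  have hp1 : (1 : ℚ) < p := by exact_mod_cast hp.out.one_lt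
  have hp0 : (p : ℚ) ≠ 0 := by positivity
  have hknz : ((k : ℕ) : ℚ) ≠ 0 := Nat.cast_ne_zero.mpr hk
  have hq : (p : ℚ) ^ k / (k : ℚ) ≠ 0 := div_ne_zero (pow_ne_zero _ hp0) hknz
  rw [padicNorm.eq_zpow_of_nonzero hq]
  have hval : padicValRat p ((p : ℚ) ^ k / (k : ℚ)) = (k : ℤ) - padicValNat p k := by
    rw [padicValRat.div (pow_ne_zero _ hp0) hknz, padicValRat.pow _,
      padicValRat.self hp.out.one_lt, padicValRat.of_nat]
    ring
  rw [hval]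
  apply zpow_le_zpow_right₀ hp1.le
  omega

end aux

private lemma choose_identity {n i : ℕ} (hi : i ≤ n) :
    (n + 1 - i) * (n + 1).choose i = (n + 1) * n.choose i := by
  have h1 := Nat.add_one_mul_choose_eq n (n - i)
  have h2 : n - i + 1 = n + 1 - i := by omega
  have h3 : n.choose (n - i) = n.choose i := Nat.choose_symm hi
  have h4 : (n + 1).choose (n + 1 - i) = (n + 1).choose i := Nat.choose_symm (by omega)
  rw [h2, h3, h4] at h1
  rw [mul_comm]
  omega

private lemma faulhaber' (m n : ℕ) :
    (∑ j ∈ range m, (j : ℚ) ^ n) =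
      ∑ i ∈ range (n + 1),
        bernoulli i * (n.choose i) * (m : ℚ) ^ (n + 1 - i) / ((n + 1 - i : ℕ) : ℚ) := by
  rw [sum_range_pow]
  refine sum_congr rfl fun i hi => ?_
  have hi' : i ≤ n := by simp only [mem_range] at hi; omega
  have key : ((n + 1 - i : ℕ) : ℚ) * ((n + 1).choose i) = ((n + 1 : ℕ) : ℚ) * (n.choose i) := by
    exact_mod_cast congrArg (Nat.cast : ℕ → ℚ) (choose_identity hi')
  have h1 : ((n : ℚ) + 1) ≠ 0 := by positivity
  have h2 : ((n + 1 - i : ℕ) : ℚ) ≠ 0 := by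
    have h : 0 < n + 1 - i := by omega
    positivity
  rw [div_eq_div_iff h1 h2]
  push_cast at key ⊢
  linear_combination (bernoulli i * (m : ℚ) ^ (n + 1 - i)) * key

private lemma pB_eq (p n : ℕ) :
    (p : ℚ) * bernoulli n = (∑ j ∈ range p, (j : ℚ) ^ n)
      - ∑ i ∈ range n, bernoulli i * (n.choose i) * (p : ℚ) ^ (n + 1 - i) / ((n + 1 - i : ℕ) : ℚ) := by
  have h := faulhaber' p n
  rw [sum_range_succ] at h
  have e : n + 1 - n = 1 := by omega
  have hterm : bernoulli n * (n.choose n) * (p : ℚ) ^ (n + 1 - n) / ((n + 1 - n : ℕ) : ℚ)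
      = (p : ℚ) * bernoulli n := by
    rw [e]
    simp [mul_comm]
  rw [hterm] at h
  linarith [h]

private lemma mul3_le {a b c A C : ℚ} (ha : 0 ≤ a) (hb : 0 ≤ b) (hc : 0 ≤ c)
    (hA : a ≤ A) (hB : b ≤ 1) (hC : c ≤ C) (hC0 : 0 ≤ C) : a * b * c ≤ A * C := by
  calc a * b * c ≤ A * 1 * C := by
        exact mul_le_mul (mul_le_mul hA hB hb (le_trans ha hA)) hC hc
          (by rw [mul_one]; exact le_trans ha hA)
    _ = A * C := by ring

variable {p : ℕ} [hp : Fact p.Prime]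

private lemma term_bound {n i : ℕ} (hi : i < n) {c : ℕ}
    (hB : padicNorm p (bernoulli i) ≤ (p : ℚ))
    (hc : c + padicValNat p (n + 1 - i) ≤ n + 1 - i) :
    padicNorm p (bernoulli i * (n.choose i) * (p : ℚ) ^ (n + 1 - i) / ((n + 1 - i : ℕ) : ℚ))
      ≤ (p : ℚ) * (p : ℚ) ^ (-(c : ℤ)) := by
  rw [mul_div_assoc, padicNorm.mul, padicNorm.mul]
  exact mul3_le (padicNorm.nonneg _) (padicNorm.nonneg _) (padicNorm.nonneg _)
    hB (padicNorm.of_nat _) (norm_pow_div (by omega) hc) (by positivity)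

private lemma S_cast (p n : ℕ) :
    (∑ j ∈ range p, (j : ℚ) ^ n) = ((∑ j ∈ range p, j ^ n : ℕ) : ℚ) := by
  push_cast
  rfl

lemma bernoulli_padicNorm_le (p : ℕ) [hp : Fact p.Prime] (n : ℕ) :
    padicNorm p (bernoulli n) ≤ (p : ℚ) := by
  induction n using Nat.strong_induction_on with
  | _ n ih =>
  have hp1 : (1 : ℚ) < p := by exact_mod_cast hp.out.one_lt
  have hpB : padicNorm p ((p : ℚ) * bernoulli n) ≤ 1 := by
    rw [pB_eq p n]
    refine le_trans padicNorm.sub (max_le ?_ ?_)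
    · rw [S_cast]; exact padicNorm.of_nat _
    · refine padicNorm.sum_le' (fun i hi => ?_) zero_le_one
      simp only [mem_range] at hi
      have h1 := term_bound (p := p) hi (c := 1) (ih i hi) (by
        have := val_add_one_le (p := p) (k := n + 1 - i) (by omega); omega)
      calc padicNorm p _ ≤ (p : ℚ) * (p : ℚ) ^ (-(1 : ℕ) : ℤ) := h1
        _ = 1 := by
          rw [show (-(1:ℕ) : ℤ) = -1 by norm_num, zpow_neg_one]
          field_simp
  rw [padicNorm.mul, padicNorm.padicNorm_p_of_prime] at hpB
  calc padicNorm p (bernoulli n) = (p : ℚ) * ((p : ℚ)⁻¹ * padicNorm p (bernoulli n)) := by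
        field_simp
    _ ≤ (p : ℚ) * 1 := by
        apply mul_le_mul_of_nonneg_left hpB (by positivity)
    _ = (p : ℚ) := mul_one _

private lemma dvd_S {p : ℕ} [hp : Fact p.Prime] {n : ℕ} (hn : 1 ≤ n) (h : ¬(p - 1) ∣ n) :
    p ∣ ∑ j ∈ range p, j ^ n := by
  haveI : NeZero p := ⟨hp.out.ne_zero⟩
  rw [← ZMod.natCast_eq_zero_iff]
  push_cast
  have h1 : ∑ j ∈ range p, ((j : ZMod p)) ^ n = ∑ x : ZMod p, x ^ n := by
    refine Finset.sum_nbij' (fun j => ((j : ZMod p))) (fun x => x.val)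
      (fun a _ => mem_univ _) (fun a _ => mem_range.mpr (ZMod.val_lt _))
      (fun a ha => ZMod.val_natCast_of_lt (mem_range.mp ha))
      (fun a _ => ZMod.natCast_rightInverse a) (fun a _ => rfl)
  rw [h1]
  classical
  let φ : (ZMod p)ˣ ↪ ZMod p := ⟨fun x => x, fun _ _ h => Units.ext h⟩
  have huniv : univ.map φ = univ \ {0} := by
    ext x
    simp only [mem_map, mem_univ, true_and, mem_sdiff, mem_singleton, φ,
      Function.Embedding.coeFn_mk]
    constructor
    · rintro ⟨a, rfl⟩
      exact a.ne_zero
    · intro hx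
      obtain ⟨u, rfl⟩ := isUnit_iff_ne_zero.mpr hx
      exact ⟨u, rfl⟩
  calc ∑ x : ZMod p, x ^ n
      = ∑ x ∈ univ \ {(0 : ZMod p)}, x ^ n := by
        rw [← Finset.sum_sdiff (Finset.subset_univ {(0 : ZMod p)}), Finset.sum_singleton,
          zero_pow (by omega), add_zero]
    _ = ∑ x : (ZMod p)ˣ, ((x : ZMod p)) ^ n := by
        rw [← huniv, Finset.sum_map]; rfl
    _ = 0 := by
        have h2 := FiniteField.sum_pow_units (ZMod p) n
        rw [ZMod.card] at h2
        rw [h2, if_neg h]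

private lemma fermat_dvd {p : ℕ} [hp : Fact p.Prime] (hp2 : p ≠ 2) {n : ℕ}
    (hd : (p - 1) ∣ n) : (p : ℤ) ∣ 2 ^ n - 1 := by
  rw [← ZMod.intCast_zmod_eq_zero_iff_dvd]
  push_cast
  obtain ⟨m, rfl⟩ := hd
  have h2 : (2 : ZMod p) ≠ 0 := by
    intro heq
    have hc : ((2 : ℕ) : ZMod p) = 0 := by exact_mod_cast heq
    rw [ZMod.natCast_eq_zero_iff] at hc
    have := Nat.le_of_dvd (by norm_num) hc
    have := hp.out.two_le
    omega
  rw [pow_mul, ZMod.pow_card_sub_one_eq_one h2, one_pow, sub_self]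

-- L2 : sharper bound for odd p when (p-1) ∤ n
lemma bernoulli_padicNorm_le_one {p : ℕ} [hp : Fact p.Prime] (hp2 : p ≠ 2) {n : ℕ}
    (hn : 1 ≤ n) (h : ¬(p - 1) ∣ n) : padicNorm p (bernoulli n) ≤ 1 := by
  have hp1 : (1 : ℚ) < p := by exact_mod_cast hp.out.one_lt
  have hinv : (0:ℚ) ≤ (p : ℚ)⁻¹ := by positivity
  have hpB : padicNorm p ((p : ℚ) * bernoulli n) ≤ (p : ℚ)⁻¹ := by
    rw [pB_eq p n]
    refine le_trans padicNorm.sub (max_le ?_ ?_)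
    · rw [S_cast]
      have hd : (↑(p ^ 1) : ℤ) ∣ ((∑ j ∈ range p, j ^ n : ℕ) : ℤ) := by
        rw [pow_one]
        exact_mod_cast Int.natCast_dvd_natCast.mpr (dvd_S hn h)
      have := (padicNorm.dvd_iff_norm_le (p := p) (n := 1)
        (z := ((∑ j ∈ range p, j ^ n : ℕ) : ℤ))).mp hd
      rw [show (-(1 : ℕ) : ℤ) = -1 by norm_num, zpow_neg_one] at this
      exact_mod_cast this
    · refine padicNorm.sum_le' (fun i hi => ?_) hinv
      simp only [mem_range] at hi
      have h1 := term_bound (p := p) hi (c := 2) (bernoulli_padicNorm_le p i) (by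
        have := val_add_two_le (p := p) hp2 (k := n + 1 - i) (by omega); omega)
      refine le_trans h1 (le_of_eq ?_)
      have hpne : (p:ℚ) ≠ 0 := by positivity
      rw [show (-(2:ℕ) : ℤ) = -2 by norm_num]
      rw [zpow_neg, zpow_two]
      field_simp
  rw [padicNorm.mul, padicNorm.padicNorm_p_of_prime] at hpB
  have hppos : (0:ℚ) < p := by positivity
  calc padicNorm p (bernoulli n) = (p : ℚ) * ((p : ℚ)⁻¹ * padicNorm p (bernoulli n)) := by
        field_simp
    _ ≤ (p : ℚ) * (p : ℚ)⁻¹ := mul_le_mul_of_nonneg_left hpB (by positivity)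
    _ = 1 := by field_simp

lemma int_of_padicNorm_le_one (q : ℚ) (h : ∀ p : ℕ, p.Prime → padicNorm p q ≤ 1) :
    ∃ G : ℤ, (G : ℚ) = q := by
  by_cases hq : q = 0
  · exact ⟨0, by simp [hq]⟩
  refine ⟨q.num, ?_⟩
  have hden : q.den = 1 := by
    by_contra hd
    obtain ⟨p, hpp, hdvd⟩ := Nat.exists_prime_and_dvd hd
    haveI : Fact p.Prime := ⟨hpp⟩
    have hp1 : (1 : ℚ) < p := by exact_mod_cast hpp.one_lt
    have h1 : padicValRat p q ≤ -1 := by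
      rw [padicValRat_def]
      have hnum : padicValInt p q.num = 0 := by
        unfold padicValInt
        apply padicValNat.eq_zero_of_not_dvd
        intro hcon
        have hg : p ∣ Nat.gcd q.num.natAbs q.den := Nat.dvd_gcd hcon hdvd
        rw [q.reduced] at hg
        have := Nat.le_of_dvd one_pos hg
        have := hpp.one_lt
        omega
      have hden1 : 1 ≤ padicValNat p q.den :=
        one_le_padicValNat_of_dvd q.den_pos.ne' hdvd
      omega
    have h2 : (p : ℚ) ^ (1 : ℤ) ≤ padicNorm p q := by
      rw [padicNorm.eq_zpow_of_nonzero hq]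
      exact zpow_le_zpow_right₀ hp1.le (by omega)
    have h3 := h p hpp
    rw [zpow_one] at h2
    linarith
  conv_rhs => rw [← Rat.num_div_den q]
  rw [hden]
  simp

theorem stmt14 (n : ℕ) (hn : 1 ≤ n) :
    ∃ G : ℤ, (G : ℚ) = 2 * (1 - 2 ^ n) * bernoulli n := by
  apply int_of_padicNorm_le_one
  intro p hpp
  haveI : Fact p.Prime := ⟨hpp⟩
  have hp1 : (1 : ℚ) < p := by exact_mod_cast hpp.one_lt
  have hB := bernoulli_padicNorm_le p n
  have hmid_int : ((1 : ℚ) - 2 ^ n) = (((1 - 2 ^ n : ℤ)) : ℚ) := by push_cast; ring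
  have hmid1 : padicNorm p ((1 : ℚ) - 2 ^ n) ≤ 1 := by
    rw [hmid_int]; exact padicNorm.of_int _
  have h2le : padicNorm p (2 : ℚ) ≤ 1 := by
    have := padicNorm.of_nat (p := p) 2
    simpa using this
  rw [padicNorm.mul, padicNorm.mul]
  rcases eq_or_ne p 2 with rfl | hp2
  · -- p = 2
    have h22 : padicNorm 2 (2 : ℚ) = (2 : ℚ)⁻¹ := by
      have := padicNorm.padicNorm_p_of_prime (p := 2)
      simpa using this
    have hBb : padicNorm 2 (bernoulli n) ≤ (2:ℚ) := by exact_mod_cast hB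
    calc padicNorm 2 2 * padicNorm 2 (1 - 2 ^ n) * padicNorm 2 (bernoulli n)
        ≤ (2:ℚ)⁻¹ * 1 * 2 :=
          mul_le_mul (mul_le_mul (le_of_eq h22) hmid1 (padicNorm.nonneg _) (by norm_num))
            hBb (padicNorm.nonneg _) (by norm_num)
      _ = 1 := by norm_num
  · by_cases hd : (p - 1) ∣ n
    · -- 1 * p⁻¹ * p
      have hmid : padicNorm p ((1:ℚ) - 2 ^ n) ≤ (p : ℚ)⁻¹ := by
        have hdvd : (↑(p ^ 1) : ℤ) ∣ (-(2 ^ n - 1) : ℤ) := by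
          rw [pow_one]; exact dvd_neg.mpr (fermat_dvd hp2 hd)
        have := (padicNorm.dvd_iff_norm_le (p := p) (n := 1) (z := (-(2 ^ n - 1) : ℤ))).mp hdvd
        rw [show (-(1 : ℕ) : ℤ) = -1 by norm_num, zpow_neg_one] at this
        have he : ((-(2 ^ n - 1) : ℤ) : ℚ) = (1 : ℚ) - 2 ^ n := by push_cast; ring
        rwa [he] at this
      calc padicNorm p 2 * padicNorm p (1 - 2 ^ n) * padicNorm p (bernoulli n)
          ≤ 1 * (p : ℚ)⁻¹ * (p : ℚ) := by
            apply mul_le_mul (mul_le_mul h2le hmid (padicNorm.nonneg _) zero_le_one)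
              hB (padicNorm.nonneg _) (by positivity)
        _ = 1 := by field_simp
    · have hB1 := bernoulli_padicNorm_le_one hp2 hn hd
      calc padicNorm p 2 * padicNorm p (1 - 2 ^ n) * padicNorm p (bernoulli n)
          ≤ 1 * 1 * 1 := by
            apply mul_le_mul (mul_le_mul h2le hmid1 (padicNorm.nonneg _) zero_le_one)
              hB1 (padicNorm.nonneg _) (by norm_num)
        _ = 1 := by norm_num
end
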